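/- arXiv:1906.03885 — 8 statements merged into one kernel-verified Lean document; each statement's English description precedes it below -/
import Mathlib

section
/- If (φ₀, ψ, ψ̂): C_A → C_{A'} is a real calculus homomorphism with φ₀ surjective, then ψ: g' → g is injective and ψ̂: M_Ψ → M' is surjective. -/
open MulOpposite

attribute [instance] LieRing.ofAssociativeRing

/-- A derivation of a (possibly noncommutative) unital `ℝ`-algebra `A`. -/
def IsDerivation {A : Type} [Ring A] [Algebra ℝ A] (d : Module.End ℝ A) : Prop :=
  ∀ a b : A, d (a * b) = d a * b + a * d b

/-- A real calculus `(A, g, M, φ)` over a unital `∗`-algebra `A`: a finite-dimensional real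
Lie algebra `g` of derivations of `A`, a right `A`-module `M` (encoded as a module over
`Aᵐᵒᵖ`), and an `ℝ`-linear map `φ : g → M` whose image generates `M`. -/
structure RealCalculus (A : Type) [Ring A] [StarRing A] [Algebra ℝ A]
    (M : Type) [AddCommGroup M] [Module ℝ M] [Module Aᵐᵒᵖ M]
    [IsScalarTower ℝ Aᵐᵒᵖ M] where
  g : LieSubalgebra ℝ (Module.End ℝ A)
  g_der : ∀ d ∈ g, IsDerivation d
  g_findim : FiniteDimensional ℝ g
  φ : g →ₗ[ℝ] M
  span_eq : Submodule.span Aᵐᵒᵖ (Set.range φ) = ⊤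

/-- A hermitian form on a right `A`-module `M`. -/
structure IsHermitianForm (A : Type) [Ring A] [StarRing A]
    (M : Type) [AddCommGroup M] [Module Aᵐᵒᵖ M] (h : M → M → A) : Prop where
  add_right : ∀ m n₁ n₂, h m (n₁ + n₂) = h m n₁ + h m n₂
  smul_right : ∀ m n (a : A), h m (op a • n) = h m n * a
  star_eq : ∀ m n, h m n = star (h n m)

/-- A real metric calculus: a real calculus together with a nondegenerate hermitian form `h`
for which `h(φ(∂₁), φ(∂₂))` is hermitian. -/
structure IsRealMetricCalculus {A : Type} [Ring A] [StarRing A] [Algebra ℝ A]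
    {M : Type} [AddCommGroup M] [Module ℝ M] [Module Aᵐᵒᵖ M] [IsScalarTower ℝ Aᵐᵒᵖ M]
    (C : RealCalculus A M) (h : M → M → A) : Prop where
  herm : IsHermitianForm A M h
  nondeg : ∀ m, (∀ n, h m n = 0) → m = 0
  real : ∀ d₁ d₂ : C.g, star (h (C.φ d₁) (C.φ d₂)) = h (C.φ d₁) (C.φ d₂)

section Hom

variable {A : Type} [Ring A] [StarRing A] [Algebra ℝ A]
  {M : Type} [AddCommGroup M] [Module ℝ M] [Module Aᵐᵒᵖ M] [IsScalarTower ℝ Aᵐᵒᵖ M]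
  {A' : Type} [Ring A'] [StarRing A'] [Algebra ℝ A']
  {M' : Type} [AddCommGroup M'] [Module ℝ M'] [Module A'ᵐᵒᵖ M'] [IsScalarTower ℝ A'ᵐᵒᵖ M']

/-- The submodule `M_Ψ` of `M` generated by `Ψ(g') = φ(ψ(g'))`. -/
def RealCalculus.MPsi (C : RealCalculus A M) (C' : RealCalculus A' M')
    (ψ : C'.g →ₗ⁅ℝ⁆ C.g) : Submodule Aᵐᵒᵖ M :=
  Submodule.span Aᵐᵒᵖ (Set.range fun δ : C'.g => C.φ (ψ δ))

/-- A real calculus homomorphism `(φ₀, ψ, ψ̂) : C_A → C_{A'}`. -/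
structure RCHom (C : RealCalculus A M) (C' : RealCalculus A' M') where
  φ₀ : A →⋆ₐ[ℝ] A'
  ψ : C'.g →ₗ⁅ℝ⁆ C.g
  compat : ∀ (δ : C'.g) (a : A),
    (δ : Module.End ℝ A') (φ₀ a) = φ₀ ((ψ δ : Module.End ℝ A) a)
  ψh : RealCalculus.MPsi C C' ψ →+ M'
  ψh_smul : ∀ (m : RealCalculus.MPsi C C' ψ) (a : A),
    ψh ⟨op a • (m : M), (RealCalculus.MPsi C C' ψ).smul_mem _ m.2⟩ = op (φ₀ a) • ψh m
  ψh_phi : ∀ δ : C'.g,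
    ψh ⟨C.φ (ψ δ), Submodule.subset_span ⟨δ, rfl⟩⟩ = C'.φ δ

end Hom

section Conn

variable {A : Type} [Ring A] [StarRing A] [Algebra ℝ A]
  {M : Type} [AddCommGroup M] [Module ℝ M] [Module Aᵐᵒᵖ M] [IsScalarTower ℝ Aᵐᵒᵖ M]

/-- An affine connection on `(M, g)`. -/
structure Connection (C : RealCalculus A M) where
  cov : C.g → M → M
  add_m : ∀ (d : C.g) (m n : M), cov d (m + n) = cov d m + cov d n
  smul_d : ∀ (r : ℝ) (d d' : C.g) (m : M), cov (r • d + d') m = r • cov d m + cov d' m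
  leibniz : ∀ (d : C.g) (m : M) (a : A),
    cov d (op a • m) = op a • cov d m + op ((d : Module.End ℝ A) a) • m

variable {C : RealCalculus A M}

def Connection.IsMetric (co : Connection C) (h : M → M → A) : Prop :=
  ∀ (d : C.g) (m n : M),
    (d : Module.End ℝ A) (h m n) = h (co.cov d m) n + h m (co.cov d n)

def Connection.IsTorsionFree (co : Connection C) : Prop :=
  ∀ d₁ d₂ : C.g, co.cov d₁ (C.φ d₂) - co.cov d₂ (C.φ d₁) = C.φ ⁅d₁, d₂⁆

def Connection.IsReal (co : Connection C) (h : M → M → A) : Prop :=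
  ∀ d d₁ d₂ : C.g,
    star (h (co.cov d (C.φ d₁)) (C.φ d₂)) = h (co.cov d (C.φ d₁)) (C.φ d₂)

/-- A pseudo-Riemannian calculus: a real metric calculus with a real, metric and
torsion-free (Levi-Civita) connection. -/
structure IsPseudoRiemannian (C : RealCalculus A M) (h : M → M → A)
    (co : Connection C) : Prop where
  metricCalc : IsRealMetricCalculus C h
  conn_real : co.IsReal h
  metric : co.IsMetric h
  torsionFree : co.IsTorsionFree

end Conn

section Emb

variable {A : Type} [Ring A] [StarRing A] [Algebra ℝ A]
  {M : Type} [AddCommGroup M] [Module ℝ M] [Module Aᵐᵒᵖ M] [IsScalarTower ℝ Aᵐᵒᵖ M]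
  {A' : Type} [Ring A'] [StarRing A'] [Algebra ℝ A']
  {M' : Type} [AddCommGroup M'] [Module ℝ M'] [Module A'ᵐᵒᵖ M'] [IsScalarTower ℝ A'ᵐᵒᵖ M']

/-- An isometric embedding of real metric calculi: a real metric calculus homomorphism
with `φ₀` surjective and `M = M_Ψ ⊕ M_Ψ^⊥`, recorded via the orthogonal projection `P`
onto `M_Ψ`. -/
structure IsometricEmbedding (C : RealCalculus A M) (C' : RealCalculus A' M')
    (h : M → M → A) (h' : M' → M' → A') extends RCHom C C' where
  surj : Function.Surjective φ₀
  P : M →ₗ[Aᵐᵒᵖ] M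
  P_mem : ∀ m : M, P m ∈ RealCalculus.MPsi C C' ψ
  P_id : ∀ m ∈ RealCalculus.MPsi C C' ψ, P m = m
  P_perp : ∀ m : M, ∀ n ∈ RealCalculus.MPsi C C' ψ, h (m - P m) n = 0
  isometry : ∀ δ₁ δ₂ : C'.g,
    h' (C'.φ δ₁) (C'.φ δ₂) = φ₀ (h (C.φ (ψ δ₁)) (C.φ (ψ δ₂)))

end Emb

/-- If `(φ₀, ψ, ψ̂) : C_A → C_{A'}` is a real calculus homomorphism with
`φ₀` surjective, then `ψ` is injective and `ψ̂ : M_Ψ → M'` is surjective. -/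
theorem stmt5 {A : Type} [Ring A] [StarRing A] [Algebra ℝ A]
    {M : Type} [AddCommGroup M] [Module ℝ M] [Module Aᵐᵒᵖ M] [IsScalarTower ℝ Aᵐᵒᵖ M]
    {A' : Type} [Ring A'] [StarRing A'] [Algebra ℝ A']
    {M' : Type} [AddCommGroup M'] [Module ℝ M'] [Module A'ᵐᵒᵖ M']
    [IsScalarTower ℝ A'ᵐᵒᵖ M']
    {C : RealCalculus A M} {C' : RealCalculus A' M'}
    (F : RCHom C C') (hs : Function.Surjective F.φ₀) :
    Function.Injective F.ψ ∧ Function.Surjective F.ψh := by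
  constructor
  · intro δ₁ δ₂ hψ
    apply Subtype.ext
    apply LinearMap.ext
    intro a'
    obtain ⟨a, rfl⟩ := hs a'
    calc (δ₁ : Module.End ℝ A') (F.φ₀ a) = F.φ₀ ((F.ψ δ₁ : Module.End ℝ A) a) := F.compat δ₁ a
      _ = F.φ₀ ((F.ψ δ₂ : Module.End ℝ A) a) := by rw [hψ]
      _ = (δ₂ : Module.End ℝ A') (F.φ₀ a) := (F.compat δ₂ a).symm
  · intro m'
    have hm : m' ∈ Submodule.span A'ᵐᵒᵖ (Set.range C'.φ) := by
      rw [C'.span_eq]; trivial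
    refine Submodule.span_induction ?_ ?_ ?_ ?_ hm
    · rintro x ⟨δ, rfl⟩
      exact ⟨_, F.ψh_phi δ⟩
    · exact ⟨0, map_zero _⟩
    · rintro x y - - ⟨mx, rfl⟩ ⟨my, rfl⟩
      exact ⟨mx + my, map_add _ _ _⟩
    · rintro a' x - ⟨m, rfl⟩
      obtain ⟨a, ha⟩ := hs a'.unop
      have : a' = op (F.φ₀ a) := by rw [ha, op_unop]
      subst this
      exact ⟨_, F.ψh_smul m a⟩
end

section
/- Let (C_A, h, ∇) and (C_{A'}, h', ∇') be pseudo-Riemannian calculi and (φ₀, ψ, ψ̂): (C_A, h) → (C_{A'}, h') an isometric embedding. Then for every δ ∈ g' and m ∈ M_Ψ, the tangential projection L(δ, m) = P(∇_{ψ(δ)} m) satisfies ψ̂(L(δ, m)) = ∇'_δ ψ̂(m); i.e., L(δ, m) is an extension of ∇'_δ ψ̂(m). -/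
open MulOpposite

attribute [local instance 100] LieRing.ofAssociativeRing

section AuxLemmas

namespace IsHermitianForm

variable {A : Type} [Ring A] [StarRing A]
  {M : Type} [AddCommGroup M] [Module Aᵐᵒᵖ M] {h : M → M → A}

lemma zero_right (hf : IsHermitianForm A M h) (m : M) : h m 0 = 0 := by
  have := hf.add_right m 0 0
  rw [add_zero] at this
  exact (left_eq_add.mp this)

lemma zero_left (hf : IsHermitianForm A M h) (n : M) : h 0 n = 0 := by
  rw [hf.star_eq, hf.zero_right, star_zero]

lemma add_left (hf : IsHermitianForm A M h) (m₁ m₂ n : M) :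
    h (m₁ + m₂) n = h m₁ n + h m₂ n := by
  rw [hf.star_eq, hf.add_right, star_add, ← hf.star_eq, ← hf.star_eq]

lemma neg_left (hf : IsHermitianForm A M h) (m n : M) : h (-m) n = -(h m n) := by
  have := hf.add_left m (-m) n
  rw [add_neg_cancel, hf.zero_left] at this
  exact (eq_neg_of_add_eq_zero_right this.symm)

lemma sub_left (hf : IsHermitianForm A M h) (m₁ m₂ n : M) :
    h (m₁ - m₂) n = h m₁ n - h m₂ n := by
  rw [sub_eq_add_neg, hf.add_left, hf.neg_left, sub_eq_add_neg]

lemma smul_left (hf : IsHermitianForm A M h) (m n : M) (a : A) :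
    h (MulOpposite.op a • m) n = star a * h m n := by
  rw [hf.star_eq, hf.smul_right, star_mul, ← hf.star_eq]

end IsHermitianForm

lemma Connection.cov_zero {A : Type} [Ring A] [StarRing A] [Algebra ℝ A]
    {M : Type} [AddCommGroup M] [Module ℝ M] [Module Aᵐᵒᵖ M] [IsScalarTower ℝ Aᵐᵒᵖ M]
    {C : RealCalculus A M} (co : Connection C) (d : C.g) : co.cov d 0 = 0 := by
  have := co.add_m d 0 0
  rw [add_zero] at this
  exact (left_eq_add.mp this)

/-- Koszul's formula for a pseudo-Riemannian calculus. -/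
lemma koszul {A : Type} [Ring A] [StarRing A] [Algebra ℝ A]
    {M : Type} [AddCommGroup M] [Module ℝ M] [Module Aᵐᵒᵖ M] [IsScalarTower ℝ Aᵐᵒᵖ M]
    {C : RealCalculus A M} {h : M → M → A} {co : Connection C}
    (hPR : IsPseudoRiemannian C h co) (d d₁ d₂ : C.g) :
    h (co.cov d (C.φ d₁)) (C.φ d₂) + h (co.cov d (C.φ d₁)) (C.φ d₂) =
      (d : Module.End ℝ A) (h (C.φ d₁) (C.φ d₂))
      + (d₁ : Module.End ℝ A) (h (C.φ d) (C.φ d₂))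
      - (d₂ : Module.End ℝ A) (h (C.φ d) (C.φ d₁))
      + h (C.φ ⁅d, d₁⁆) (C.φ d₂) - h (C.φ ⁅d, d₂⁆) (C.φ d₁)
      - h (C.φ ⁅d₁, d₂⁆) (C.φ d) := by
  have hf := hPR.metricCalc.herm
  have e1 : (d : Module.End ℝ A) (h (C.φ d₁) (C.φ d₂))
      = h (co.cov d (C.φ d₁)) (C.φ d₂) + h (co.cov d (C.φ d₂)) (C.φ d₁) := by
    rw [hPR.metric d (C.φ d₁) (C.φ d₂)]
    congr 1
    rw [hf.star_eq (C.φ d₁) (co.cov d (C.φ d₂))]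
    exact hPR.conn_real d d₂ d₁
  have e2 : (d₁ : Module.End ℝ A) (h (C.φ d) (C.φ d₂))
      = h (co.cov d₁ (C.φ d)) (C.φ d₂) + h (co.cov d₁ (C.φ d₂)) (C.φ d) := by
    rw [hPR.metric d₁ (C.φ d) (C.φ d₂)]
    congr 1
    rw [hf.star_eq (C.φ d) (co.cov d₁ (C.φ d₂))]
    exact hPR.conn_real d₁ d₂ d
  have e3 : (d₂ : Module.End ℝ A) (h (C.φ d) (C.φ d₁))
      = h (co.cov d₂ (C.φ d)) (C.φ d₁) + h (co.cov d₂ (C.φ d₁)) (C.φ d) := by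
    rw [hPR.metric d₂ (C.φ d) (C.φ d₁)]
    congr 1
    rw [hf.star_eq (C.φ d) (co.cov d₂ (C.φ d₁))]
    exact hPR.conn_real d₂ d₁ d
  have t1 : co.cov d₁ (C.φ d) = co.cov d (C.φ d₁) - C.φ ⁅d, d₁⁆ := by
    have ht := hPR.torsionFree d d₁
    rw [sub_eq_iff_eq_add] at ht
    rw [ht]; abel
  have t2 : co.cov d (C.φ d₂) = co.cov d₂ (C.φ d) + C.φ ⁅d, d₂⁆ := by
    have ht := hPR.torsionFree d d₂
    rw [sub_eq_iff_eq_add] at ht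
    rw [ht]; abel
  have t3 : co.cov d₁ (C.φ d₂) = co.cov d₂ (C.φ d₁) + C.φ ⁅d₁, d₂⁆ := by
    have ht := hPR.torsionFree d₁ d₂
    rw [sub_eq_iff_eq_add] at ht
    rw [ht]; abel
  rw [e1, e2, e3, t1, t2, t3]
  simp only [hf.add_left, hf.sub_left]
  abel

section Emb2

variable {A : Type} [Ring A] [StarRing A] [Algebra ℝ A]
  {M : Type} [AddCommGroup M] [Module ℝ M] [Module Aᵐᵒᵖ M] [IsScalarTower ℝ Aᵐᵒᵖ M]
  {A' : Type} [Ring A'] [StarRing A'] [Algebra ℝ A']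
  {M' : Type} [AddCommGroup M'] [Module ℝ M'] [Module A'ᵐᵒᵖ M'] [IsScalarTower ℝ A'ᵐᵒᵖ M']
  {C : RealCalculus A M} {C' : RealCalculus A' M'}
  {h : M → M → A} {h' : M' → M' → A'}

/-- Transfer lemma: `h'(ψ̂ u, φ' δ₂) = φ₀ (h(u, Ψ δ₂))` for `u ∈ M_Ψ`. -/
lemma transfer_h (F : IsometricEmbedding C C' h h')
    (hf : IsHermitianForm A M h) (hf' : IsHermitianForm A' M' h')
    (u : M) (hu : u ∈ RealCalculus.MPsi C C' F.ψ) (δ₂ : C'.g) :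
    h' (F.ψh ⟨u, hu⟩) (C'.φ δ₂) = F.φ₀ (h u (C.φ (F.ψ δ₂))) := by
  refine Submodule.span_induction
    (p := fun x hx => h' (F.ψh ⟨x, hx⟩) (C'.φ δ₂) = F.φ₀ (h x (C.φ (F.ψ δ₂))))
    ?_ ?_ ?_ ?_ hu
  · rintro x ⟨δ₁, rfl⟩
    rw [F.ψh_phi δ₁]
    exact F.isometry δ₁ δ₂
  · show h' (F.ψh 0) (C'.φ δ₂) = F.φ₀ (h 0 (C.φ (F.ψ δ₂)))
    rw [map_zero, hf'.zero_left, hf.zero_left, map_zero]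
  · intro x y hx hy ihx ihy
    rw [show (⟨x + y, _⟩ : RealCalculus.MPsi C C' F.ψ) = ⟨x, hx⟩ + ⟨y, hy⟩ from rfl,
      map_add, hf'.add_left, hf.add_left, map_add, ihx, ihy]
  · intro a x hx ih
    have hs : F.ψh ⟨op a.unop • x, (RealCalculus.MPsi C C' F.ψ).smul_mem _ hx⟩
        = op (F.φ₀ a.unop) • F.ψh ⟨x, hx⟩ := F.ψh_smul ⟨x, hx⟩ a.unop
    rw [← op_unop a]
    calc h' (F.ψh ⟨op a.unop • x, _⟩) (C'.φ δ₂)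
        = h' (op (F.φ₀ a.unop) • F.ψh ⟨x, hx⟩) (C'.φ δ₂) := by rw [hs]
      _ = star (F.φ₀ a.unop) * h' (F.ψh ⟨x, hx⟩) (C'.φ δ₂) := hf'.smul_left _ _ _
      _ = star (F.φ₀ a.unop) * F.φ₀ (h x (C.φ (F.ψ δ₂))) := by rw [ih]
      _ = F.φ₀ (star a.unop * h x (C.φ (F.ψ δ₂))) := by rw [map_mul, map_star]
      _ = F.φ₀ (h (op a.unop • x) (C.φ (F.ψ δ₂))) := by rw [hf.smul_left]

/-- Transfer lemma for the covariant derivative. -/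
lemma transfer_cov {co : Connection C} {co' : Connection C'}
    (hPR : IsPseudoRiemannian C h co) (hPR' : IsPseudoRiemannian C' h' co')
    (F : IsometricEmbedding C C' h h') (δ δ₂ : C'.g)
    (m : M) (hm : m ∈ RealCalculus.MPsi C C' F.ψ) :
    F.φ₀ (h (co.cov (F.ψ δ) m) (C.φ (F.ψ δ₂)))
      = h' (co'.cov δ (F.ψh ⟨m, hm⟩)) (C'.φ δ₂) := by
  have hf := hPR.metricCalc.herm
  have hf' := hPR'.metricCalc.herm
  refine Submodule.span_induction
    (p := fun x hx => F.φ₀ (h (co.cov (F.ψ δ) x) (C.φ (F.ψ δ₂)))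
      = h' (co'.cov δ (F.ψh ⟨x, hx⟩)) (C'.φ δ₂)) ?_ ?_ ?_ ?_ hm
  · rintro x ⟨δ₁, rfl⟩
    rw [F.ψh_phi δ₁]
    set xx := F.φ₀ (h (co.cov (F.ψ δ) (C.φ (F.ψ δ₁))) (C.φ (F.ψ δ₂))) with hxx
    set yy := h' (co'.cov δ (C'.φ δ₁)) (C'.φ δ₂) with hyy
    have k := congrArg F.φ₀ (koszul hPR (F.ψ δ) (F.ψ δ₁) (F.ψ δ₂))
    simp only [map_add, map_sub] at k
    rw [← LieHom.map_lie F.ψ δ δ₁, ← LieHom.map_lie F.ψ δ δ₂,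
      ← LieHom.map_lie F.ψ δ₁ δ₂] at k
    rw [← F.compat δ, ← F.compat δ₁, ← F.compat δ₂] at k
    simp only [← F.isometry] at k
    have k' := koszul hPR' δ δ₁ δ₂
    have h2 : xx + xx = yy + yy := by rw [k, ← k']
    have h2' : (2 : ℝ) • xx = (2 : ℝ) • yy := by
      rw [two_smul, two_smul]; exact h2
    calc xx = (2⁻¹ : ℝ) • ((2 : ℝ) • xx) := by rw [smul_smul]; norm_num
      _ = (2⁻¹ : ℝ) • ((2 : ℝ) • yy) := by rw [h2']
      _ = yy := by rw [smul_smul]; norm_num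
  · show F.φ₀ (h (co.cov (F.ψ δ) 0) (C.φ (F.ψ δ₂))) = h' (co'.cov δ (F.ψh 0)) (C'.φ δ₂)
    rw [map_zero, co.cov_zero, co'.cov_zero, hf.zero_left, map_zero, hf'.zero_left]
  · intro x y hx hy ihx ihy
    rw [show (⟨x + y, _⟩ : RealCalculus.MPsi C C' F.ψ) = ⟨x, hx⟩ + ⟨y, hy⟩ from rfl,
      map_add, co.add_m, co'.add_m, hf.add_left, hf'.add_left, map_add, ihx, ihy]
  · intro a x hx ih
    have hs : F.ψh ⟨op a.unop • x, (RealCalculus.MPsi C C' F.ψ).smul_mem _ hx⟩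
        = op (F.φ₀ a.unop) • F.ψh ⟨x, hx⟩ := F.ψh_smul ⟨x, hx⟩ a.unop
    rw [← op_unop a]
    calc F.φ₀ (h (co.cov (F.ψ δ) (op a.unop • x)) (C.φ (F.ψ δ₂)))
        = F.φ₀ (h (op a.unop • co.cov (F.ψ δ) x
            + op ((F.ψ δ : Module.End ℝ A) a.unop) • x) (C.φ (F.ψ δ₂))) := by
          rw [co.leibniz]
      _ = star (F.φ₀ a.unop) * F.φ₀ (h (co.cov (F.ψ δ) x) (C.φ (F.ψ δ₂)))
            + star (F.φ₀ ((F.ψ δ : Module.End ℝ A) a.unop))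
              * F.φ₀ (h x (C.φ (F.ψ δ₂))) := by
          rw [hf.add_left, hf.smul_left, hf.smul_left, map_add, map_mul, map_mul,
            map_star, map_star]
      _ = star (F.φ₀ a.unop) * h' (co'.cov δ (F.ψh ⟨x, hx⟩)) (C'.φ δ₂)
            + star ((δ : Module.End ℝ A') (F.φ₀ a.unop))
              * h' (F.ψh ⟨x, hx⟩) (C'.φ δ₂) := by
          rw [ih, F.compat δ, transfer_h F hf hf' x hx δ₂]
      _ = h' (op (F.φ₀ a.unop) • co'.cov δ (F.ψh ⟨x, hx⟩)
            + op ((δ : Module.End ℝ A') (F.φ₀ a.unop)) • F.ψh ⟨x, hx⟩) (C'.φ δ₂) := by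
          rw [hf'.add_left, hf'.smul_left, hf'.smul_left]
      _ = h' (co'.cov δ (op (F.φ₀ a.unop) • F.ψh ⟨x, hx⟩)) (C'.φ δ₂) := by
          rw [co'.leibniz]
      _ = h' (co'.cov δ (F.ψh ⟨op a.unop • x, _⟩)) (C'.φ δ₂) := by rw [hs]

end Emb2

end AuxLemmas

/-- For an isometric embedding of pseudo-Riemannian calculi, the tangential
projection `L(δ, m) = P(∇_{ψ(δ)} m)` of the ambient Levi-Civita connection is an
extension of `∇'_δ ψ̂(m)`, i.e. `ψ̂(L(δ, m)) = ∇'_δ ψ̂(m)`. -/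
theorem stmt6 {A : Type} [Ring A] [StarRing A] [Algebra ℝ A]
    {M : Type} [AddCommGroup M] [Module ℝ M] [Module Aᵐᵒᵖ M] [IsScalarTower ℝ Aᵐᵒᵖ M]
    {A' : Type} [Ring A'] [StarRing A'] [Algebra ℝ A']
    {M' : Type} [AddCommGroup M'] [Module ℝ M'] [Module A'ᵐᵒᵖ M']
    [IsScalarTower ℝ A'ᵐᵒᵖ M']
    {C : RealCalculus A M} {C' : RealCalculus A' M'}
    (h : M → M → A) (h' : M' → M' → A')
    (co : Connection C) (co' : Connection C')
    (hPR : IsPseudoRiemannian C h co) (hPR' : IsPseudoRiemannian C' h' co')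
    (F : IsometricEmbedding C C' h h')
    (δ : C'.g) (m : M) (hm : m ∈ RealCalculus.MPsi C C' F.ψ) :
    F.ψh ⟨F.P (co.cov (F.ψ δ) m), F.P_mem _⟩ = co'.cov δ (F.ψh ⟨m, hm⟩) := by
  have hf := hPR.metricCalc.herm
  have hf' := hPR'.metricCalc.herm
  set L := F.ψh ⟨F.P (co.cov (F.ψ δ) m), F.P_mem _⟩ with hL
  set R := co'.cov δ (F.ψh ⟨m, hm⟩) with hR
  rw [← sub_eq_zero]
  apply hPR'.metricCalc.nondeg
  intro n
  have hn : n ∈ Submodule.span A'ᵐᵒᵖ (Set.range C'.φ) := by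
    rw [C'.span_eq]; trivial
  refine Submodule.span_induction (p := fun x _ => h' (L - R) x = 0) ?_ ?_ ?_ ?_ hn
  · rintro x ⟨δ₂, rfl⟩
    rw [hf'.sub_left]
    have hLv : h' L (C'.φ δ₂) = F.φ₀ (h (F.P (co.cov (F.ψ δ) m)) (C.φ (F.ψ δ₂))) :=
      transfer_h F hf hf' _ (F.P_mem _) δ₂
    have hPeq : h (F.P (co.cov (F.ψ δ) m)) (C.φ (F.ψ δ₂))
        = h (co.cov (F.ψ δ) m) (C.φ (F.ψ δ₂)) := by
      have hperp := F.P_perp (co.cov (F.ψ δ) m) (C.φ (F.ψ δ₂))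
        (Submodule.subset_span ⟨δ₂, rfl⟩)
      rw [hf.sub_left] at hperp
      exact (sub_eq_zero.mp hperp).symm
    have hRv : h' R (C'.φ δ₂) = F.φ₀ (h (co.cov (F.ψ δ) m) (C.φ (F.ψ δ₂))) :=
      (transfer_cov hPR hPR' F δ δ₂ m hm).symm
    rw [hLv, hRv, hPeq, sub_self]
  · exact hf'.zero_right _
  · intro x y _ _ ihx ihy
    rw [hf'.add_right, ihx, ihy, add_zero]
  · intro a x _ ih
    rw [← op_unop a, hf'.smul_right, ih, zero_mul]
end

section
/- Let (φ₀, ψ, ψ̂): (C_A, h) → (C_{A'}, h') be an isometric embedding of pseudo-Riemannian calculi and define the second fundamental form α(δ, m) = Π(∇_{ψ(δ)} m) for δ ∈ g', m ∈ M_Ψ, where Π is the orthogonal projection onto M_Ψ^⊥. Then α(δ₁, Ψ(δ₂)) = α(δ₂, Ψ(δ₁)) for all δ₁, δ₂ ∈ g'. -/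
open MulOpposite

attribute [local instance 100] LieRing.ofAssociativeRing

/-- The second fundamental form `α(δ, m) = Π(∇_{ψ(δ)} m)` (with
`Π = id − P` the orthogonal projection onto `M_Ψ^⊥`) is symmetric:
`α(δ₁, Ψ(δ₂)) = α(δ₂, Ψ(δ₁))`. -/
theorem stmt7 {A : Type} [Ring A] [StarRing A] [Algebra ℝ A]
    {M : Type} [AddCommGroup M] [Module ℝ M] [Module Aᵐᵒᵖ M] [IsScalarTower ℝ Aᵐᵒᵖ M]
    {A' : Type} [Ring A'] [StarRing A'] [Algebra ℝ A']
    {M' : Type} [AddCommGroup M'] [Module ℝ M'] [Module A'ᵐᵒᵖ M']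
    [IsScalarTower ℝ A'ᵐᵒᵖ M']
    {C : RealCalculus A M} {C' : RealCalculus A' M'}
    (h : M → M → A) (h' : M' → M' → A')
    (co : Connection C) (co' : Connection C')
    (hPR : IsPseudoRiemannian C h co) (hPR' : IsPseudoRiemannian C' h' co')
    (F : IsometricEmbedding C C' h h')
    (δ₁ δ₂ : C'.g) :
    co.cov (F.ψ δ₁) (C.φ (F.ψ δ₂)) - F.P (co.cov (F.ψ δ₁) (C.φ (F.ψ δ₂))) =
      co.cov (F.ψ δ₂) (C.φ (F.ψ δ₁)) - F.P (co.cov (F.ψ δ₂) (C.φ (F.ψ δ₁))) := by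
  set x := co.cov (F.ψ δ₁) (C.φ (F.ψ δ₂))
  set y := co.cov (F.ψ δ₂) (C.φ (F.ψ δ₁))
  have htf : x - y = C.φ ⁅F.ψ δ₁, F.ψ δ₂⁆ := hPR.torsionFree _ _
  have hmem : x - y ∈ RealCalculus.MPsi C C' F.ψ := by
    rw [htf, ← F.ψ.map_lie]
    exact Submodule.subset_span ⟨⁅δ₁, δ₂⁆, rfl⟩
  have hP : F.P (x - y) = x - y := F.P_id _ hmem
  rw [map_sub] at hP
  have : (x - F.P x) - (y - F.P y) = (x - y) - (F.P x - F.P y) := by abel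
  have h0 : (x - F.P x) - (y - F.P y) = 0 := by rw [this, hP, sub_self]
  exact sub_eq_zero.mp h0
end

section
/- Let (φ₀, ψ, ψ̂): (C_A, h) → (C_{A'}, h') be an isometric embedding of pseudo-Riemannian calculi. For δ ∈ g', m ∈ M_Ψ and ξ ∈ M_Ψ^⊥, define the Weingarten map A_ξ(δ) = −P(∇_{ψ(δ)}ξ) and the second fundamental form α(δ, m) = Π(∇_{ψ(δ)}m). Then h(A_ξ(δ), m) = h(ξ, α(δ, m)). -/
open MulOpposite

attribute [local instance 100] LieRing.ofAssociativeRing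

/-- For the Weingarten map `A_ξ(δ) = −P(∇_{ψ(δ)} ξ)` and the second
fundamental form `α(δ, m) = Π(∇_{ψ(δ)} m)` one has `h(A_ξ(δ), m) = h(ξ, α(δ, m))`
for `m ∈ M_Ψ` and `ξ ∈ M_Ψ^⊥`. -/
theorem stmt9 {A : Type} [Ring A] [StarRing A] [Algebra ℝ A]
    {M : Type} [AddCommGroup M] [Module ℝ M] [Module Aᵐᵒᵖ M] [IsScalarTower ℝ Aᵐᵒᵖ M]
    {A' : Type} [Ring A'] [StarRing A'] [Algebra ℝ A']
    {M' : Type} [AddCommGroup M'] [Module ℝ M'] [Module A'ᵐᵒᵖ M']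
    [IsScalarTower ℝ A'ᵐᵒᵖ M']
    {C : RealCalculus A M} {C' : RealCalculus A' M'}
    (h : M → M → A) (h' : M' → M' → A')
    (co : Connection C) (co' : Connection C')
    (hPR : IsPseudoRiemannian C h co) (hPR' : IsPseudoRiemannian C' h' co')
    (F : IsometricEmbedding C C' h h')
    (δ : C'.g) (m : M) (hm : m ∈ RealCalculus.MPsi C C' F.ψ)
    (ξ : M) (hξ : ∀ n ∈ RealCalculus.MPsi C C' F.ψ, h ξ n = 0) :
    h (-(F.P (co.cov (F.ψ δ) ξ))) m =
      h ξ (co.cov (F.ψ δ) m - F.P (co.cov (F.ψ δ) m)) := by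
  have herm := hPR.metricCalc.herm
  set d := F.ψ δ with hd
  have hsub_right : ∀ x y z : M, h x (y - z) = h x y - h x z := by
    intro x y z
    exact map_sub (AddMonoidHom.mk' (h x) (herm.add_right x)) y z
  have hsub_left : ∀ x y z : M, h (x - y) z = h x z - h y z := by
    intro x y z
    rw [herm.star_eq (x - y), herm.star_eq x, herm.star_eq y, hsub_right, star_sub]
  have hneg_left : ∀ x z : M, h (-x) z = - h x z := by
    intro x z
    have h0 : h (x - x) z = h x z - h x z := hsub_left x x z
    have := hsub_left 0 x z
    simp only [zero_sub] at this
    rw [this]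
    have h0l : h (0 : M) z = 0 := by
      have := hsub_left x x z
      rw [sub_self, sub_self] at this
      exact this
    rw [h0l, zero_sub]
  have e1 : h (F.P (co.cov d ξ)) m = h (co.cov d ξ) m := by
    have hp := F.P_perp (co.cov d ξ) m hm
    rw [hsub_left] at hp
    exact (sub_eq_zero.mp hp).symm
  have e2 : h ξ (F.P (co.cov d m)) = 0 := hξ _ (F.P_mem _)
  have e3 := hPR.metric d ξ m
  rw [hξ m hm, map_zero] at e3
  rw [hneg_left, e1, hsub_right, e2, sub_zero]
  exact neg_eq_of_add_eq_zero_right e3.symm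
end

section
/- For an isometric embedding of pseudo-Riemannian calculi, the normal component D_δ ξ = Π(∇_{ψ(δ)} ξ) defines a connection on M_Ψ^⊥: it is additive in ξ, ℝ-linear in δ, and satisfies the Leibniz rule D_δ(ξa) = (D_δ ξ)a + ξ ψ(δ)(a) for a ∈ A. -/
open MulOpposite

attribute [local instance] LieRing.ofAssociativeRing

/-- The normal component `D_δ ξ = Π(∇_{ψ(δ)} ξ)` defines a connection on
`M_Ψ^⊥`: additive in `ξ`, `ℝ`-linear in `δ`, and satisfying the Leibniz rule. -/
theorem stmt10 {A : Type} [Ring A] [StarRing A] [Algebra ℝ A]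
    {M : Type} [AddCommGroup M] [Module ℝ M] [Module Aᵐᵒᵖ M] [IsScalarTower ℝ Aᵐᵒᵖ M]
    {A' : Type} [Ring A'] [StarRing A'] [Algebra ℝ A']
    {M' : Type} [AddCommGroup M'] [Module ℝ M'] [Module A'ᵐᵒᵖ M']
    [IsScalarTower ℝ A'ᵐᵒᵖ M']
    {C : RealCalculus A M} {C' : RealCalculus A' M'}
    (h : M → M → A) (h' : M' → M' → A')
    (co : Connection C) (co' : Connection C')
    (hPR : IsPseudoRiemannian C h co) (hPR' : IsPseudoRiemannian C' h' co')
    (F : IsometricEmbedding C C' h h') :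
    -- notation: D δ ξ := co.cov (F.ψ δ) ξ - F.P (co.cov (F.ψ δ) ξ)
    (∀ (δ : C'.g) (ξ₁ ξ₂ : M),
      (∀ n ∈ RealCalculus.MPsi C C' F.ψ, h ξ₁ n = 0) →
      (∀ n ∈ RealCalculus.MPsi C C' F.ψ, h ξ₂ n = 0) →
      co.cov (F.ψ δ) (ξ₁ + ξ₂) - F.P (co.cov (F.ψ δ) (ξ₁ + ξ₂)) =
        (co.cov (F.ψ δ) ξ₁ - F.P (co.cov (F.ψ δ) ξ₁)) +
        (co.cov (F.ψ δ) ξ₂ - F.P (co.cov (F.ψ δ) ξ₂))) ∧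
    (∀ (l : ℝ) (δ₁ δ₂ : C'.g) (ξ : M),
      (∀ n ∈ RealCalculus.MPsi C C' F.ψ, h ξ n = 0) →
      co.cov (F.ψ (l • δ₁ + δ₂)) ξ - F.P (co.cov (F.ψ (l • δ₁ + δ₂)) ξ) =
        l • (co.cov (F.ψ δ₁) ξ - F.P (co.cov (F.ψ δ₁) ξ)) +
        (co.cov (F.ψ δ₂) ξ - F.P (co.cov (F.ψ δ₂) ξ))) ∧
    (∀ (δ : C'.g) (ξ : M) (a : A),
      (∀ n ∈ RealCalculus.MPsi C C' F.ψ, h ξ n = 0) →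
      co.cov (F.ψ δ) (op a • ξ) - F.P (co.cov (F.ψ δ) (op a • ξ)) =
        op a • (co.cov (F.ψ δ) ξ - F.P (co.cov (F.ψ δ) ξ)) +
        op ((F.ψ δ : Module.End ℝ A) a) • ξ) := by
  -- P kills vectors orthogonal to M_Ψ
  have hPzero : ∀ m : M, (∀ n ∈ RealCalculus.MPsi C C' F.ψ, h m n = 0) → F.P m = 0 := by
    intro m hm
    apply hPR.metricCalc.nondeg
    intro n
    have h1 : h (F.P m) (F.P n) = 0 := by
      have hmP : h m (F.P n) = 0 := hm _ (F.P_mem n)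
      have hperp : h (m - F.P m) (F.P n) = 0 := F.P_perp m _ (F.P_mem n)
      have hl : h (m - F.P m) (F.P n) = h m (F.P n) - h (F.P m) (F.P n) := by
        have hst := hPR.metricCalc.herm.star_eq (m - F.P m) (F.P n)
        have e1 : h (F.P n) (m - F.P m) = h (F.P n) m - h (F.P n) (F.P m) := by
          have t := hPR.metricCalc.herm.add_right (F.P n) (m - F.P m) (F.P m)
          rw [sub_add_cancel] at t
          exact eq_sub_of_add_eq t.symm
        rw [hst, e1, star_sub, ← hPR.metricCalc.herm.star_eq,
          ← hPR.metricCalc.herm.star_eq]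
      rw [hl, hmP, zero_sub, neg_eq_zero] at hperp
      exact hperp
    have h2 : h (F.P m) (n - F.P n) = 0 := by
      rw [hPR.metricCalc.herm.star_eq, F.P_perp n _ (F.P_mem m), star_zero]
    have : h (F.P m) n = h (F.P m) (F.P n) + h (F.P m) (n - F.P n) := by
      have := hPR.metricCalc.herm.add_right (F.P m) (F.P n) (n - F.P n)
      simpa using this
    rw [this, h1, h2, add_zero]
  -- ℝ-linearity of P
  have hPreal : ∀ (l : ℝ) (m : M), F.P (l • m) = l • F.P m := by
    intro l m
    have e : l • m = (l • (1 : Aᵐᵒᵖ)) • m := by rw [smul_assoc, one_smul]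
    rw [e, F.P.map_smul, smul_assoc, one_smul]
  refine ⟨?_, ?_, ?_⟩
  · intro δ ξ₁ ξ₂ _ _
    rw [co.add_m, map_add]
    abel
  · intro l δ₁ δ₂ ξ _
    have e : F.ψ (l • δ₁ + δ₂) = l • F.ψ δ₁ + F.ψ δ₂ := by
      rw [map_add, map_smul]
    rw [e, co.smul_d, map_add, hPreal]
    simp only [smul_sub]
    abel
  · intro δ ξ a hξ
    have hperp : ∀ n ∈ RealCalculus.MPsi C C' F.ψ,
        h (op ((F.ψ δ : Module.End ℝ A) a) • ξ) n = 0 := by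
      intro n hn
      rw [hPR.metricCalc.herm.star_eq, hPR.metricCalc.herm.smul_right,
        hPR.metricCalc.herm.star_eq n ξ, hξ n hn, star_zero, zero_mul, star_zero]
    rw [co.leibniz, map_add, F.P.map_smul, hPzero _ hperp]
    simp only [smul_sub, add_zero]
    abel
end

section
/- Let (C_A, h) be a free real metric calculus with basis ∂₁,…,∂_m of g satisfying [∂_a, ∂_b] = 0 for all a, b, and let ∇ be its Levi-Civita connection with Christoffel symbols defined by ∇_b E_c = E_a Γ^a_{bc}. Then Γ^a_{bc} = ½ h^{ad}(∂_b h_{cd} + ∂_c h_{bd} − ∂_d h_{bc}), where h_{ab} = h(E_a, E_b) and h^{ab} is the inverse: h^{ab}h_{bc} = δ^a_c·1. -/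
open MulOpposite

attribute [local instance 100] LieRing.ofAssociativeRing

/-- For a free real metric calculus with a commuting basis of `g`, the
Christoffel symbols `∇_b E_c = E_a Γ^a_{bc}` of the Levi-Civita connection are
`Γ^a_{bc} = ½ h^{ad}(∂_b h_{cd} + ∂_c h_{bd} − ∂_d h_{bc})`. -/
theorem stmt13 {A : Type} [Ring A] [StarRing A] [Algebra ℝ A]
    {M : Type} [AddCommGroup M] [Module ℝ M] [Module Aᵐᵒᵖ M] [IsScalarTower ℝ Aᵐᵒᵖ M]
    (C : RealCalculus A M) (h : M → M → A)
    (n : ℕ) (bg : Module.Basis (Fin n) ℝ C.g) (bM : Module.Basis (Fin n) Aᵐᵒᵖ M)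
    (hb : ∀ i, bM i = C.φ (bg i))
    (hinv : ∀ f : M →ₗ[Aᵐᵒᵖ] A, ∃! m : M, ∀ x, h m x = f x)
    (hcomm : ∀ i j, ⁅bg i, bg j⁆ = 0)
    (co : Connection C) (hPR : IsPseudoRiemannian C h co)
    (Γ : Fin n → Fin n → Fin n → A)
    (hΓ : ∀ b c, co.cov (bg b) (C.φ (bg c)) =
      ∑ a, op (Γ a b c) • C.φ (bg a))
    (hmet : Fin n → Fin n → A)
    (hmet_def : ∀ a b, hmet a b = h (C.φ (bg a)) (C.φ (bg b)))
    (hup : Fin n → Fin n → A)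
    (hup_l : ∀ a c, ∑ b, hup a b * hmet b c = if a = c then 1 else 0)
    (hup_r : ∀ a c, ∑ b, hmet a b * hup b c = if a = c then 1 else 0) :
    ∀ a b c, Γ a b c = (2 : ℝ)⁻¹ • ∑ d, hup a d *
      ((bg b : Module.End ℝ A) (hmet c d) + (bg c : Module.End ℝ A) (hmet b d)
        - (bg d : Module.End ℝ A) (hmet b c)) := by
    classical
  -- notation
  intro a b c
  have hadd := hPR.metricCalc.herm.add_right
  have hsmul := hPR.metricCalc.herm.smul_right
  have hstar := hPR.metricCalc.herm.star_eq
  -- h m 0 = 0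
  have hzero : ∀ m : M, h m 0 = 0 := by
    intro m
    have := hadd m 0 0
    simp only [add_zero] at this
    exact (left_eq_add.mp this)
  -- h m is additive over sums
  have hsum : ∀ (m : M) (s : Fin n → M), h m (∑ i, s i) = ∑ i, h m (s i) := by
    intro m s
    have : ∀ t : Finset (Fin n), h m (∑ i ∈ t, s i) = ∑ i ∈ t, h m (s i) := by
      intro t
      induction t using Finset.induction with
      | empty => simpa using hzero m
      | insert x t hx ih =>
        rw [Finset.sum_insert hx, Finset.sum_insert hx, hadd, ih]
    exact this _
  -- G b c d = h (E d) (∇_b E_c) expanded in Christoffel symbols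
  have hG : ∀ b c d, h (C.φ (bg d)) (co.cov (bg b) (C.φ (bg c)))
      = ∑ e, hmet d e * Γ e b c := by
    intro b c d
    rw [hΓ, hsum]
    exact Finset.sum_congr rfl fun e _ => by rw [hsmul, hmet_def]
  -- reality: h(∇_b E_c, E_d) = h(E_d, ∇_b E_c)
  have hFG : ∀ b c d, h (co.cov (bg b) (C.φ (bg c))) (C.φ (bg d))
      = h (C.φ (bg d)) (co.cov (bg b) (C.φ (bg c))) := by
    intro b c d
    conv_rhs => rw [hstar]
    exact (hPR.conn_real (bg b) (bg c) (bg d)).symm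
  -- torsion-freeness with commuting basis: symmetry of ∇
  have hsymm : ∀ b c, co.cov (bg b) (C.φ (bg c)) = co.cov (bg c) (C.φ (bg b)) := by
    intro b c
    have := hPR.torsionFree (bg b) (bg c)
    rw [hcomm b c, map_zero] at this
    exact sub_eq_zero.mp this
  -- metric compatibility
  have hmetric : ∀ b c d, (bg b : Module.End ℝ A) (hmet c d)
      = h (C.φ (bg d)) (co.cov (bg b) (C.φ (bg c)))
        + h (C.φ (bg c)) (co.cov (bg b) (C.φ (bg d))) := by
    intro b c d
    rw [hmet_def, hPR.metric (bg b) (C.φ (bg c)) (C.φ (bg d)), hFG]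
  -- contraction with the inverse metric
  have key : ∑ d, hup a d * h (C.φ (bg d)) (co.cov (bg b) (C.φ (bg c))) = Γ a b c := by
    calc ∑ d, hup a d * h (C.φ (bg d)) (co.cov (bg b) (C.φ (bg c)))
        = ∑ d, ∑ e, hup a d * (hmet d e * Γ e b c) := by
          refine Finset.sum_congr rfl fun d _ => ?_
          rw [hG, Finset.mul_sum]
      _ = ∑ e, (∑ d, hup a d * hmet d e) * Γ e b c := by
          rw [Finset.sum_comm]
          exact Finset.sum_congr rfl fun e _ => by rw [Finset.sum_mul]; simp [mul_assoc]
      _ = ∑ e, (if a = e then 1 else 0) * Γ e b c := by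
          exact Finset.sum_congr rfl fun e _ => by rw [hup_l]
      _ = Γ a b c := by simp
  -- Koszul: the inner expression is twice G b c d
  have hkoszul : ∀ d, (bg b : Module.End ℝ A) (hmet c d)
      + (bg c : Module.End ℝ A) (hmet b d) - (bg d : Module.End ℝ A) (hmet b c)
      = h (C.φ (bg d)) (co.cov (bg b) (C.φ (bg c)))
        + h (C.φ (bg d)) (co.cov (bg b) (C.φ (bg c))) := by
    intro d
    rw [hmetric b c d, hmetric c b d, hmetric d b c]
    rw [show co.cov (bg b) (C.φ (bg d)) = co.cov (bg d) (C.φ (bg b)) from hsymm b d,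
        show co.cov (bg c) (C.φ (bg d)) = co.cov (bg d) (C.φ (bg c)) from hsymm c d,
        show co.cov (bg c) (C.φ (bg b)) = co.cov (bg b) (C.φ (bg c)) from hsymm c b]
    abel
  have : ∑ d, hup a d *
      ((bg b : Module.End ℝ A) (hmet c d) + (bg c : Module.End ℝ A) (hmet b d)
        - (bg d : Module.End ℝ A) (hmet b c)) = Γ a b c + Γ a b c := by
    calc ∑ d, hup a d *
        ((bg b : Module.End ℝ A) (hmet c d) + (bg c : Module.End ℝ A) (hmet b d)
          - (bg d : Module.End ℝ A) (hmet b c))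
        = ∑ d, (hup a d * h (C.φ (bg d)) (co.cov (bg b) (C.φ (bg c)))
            + hup a d * h (C.φ (bg d)) (co.cov (bg b) (C.φ (bg c)))) := by
          refine Finset.sum_congr rfl fun d _ => ?_
          rw [hkoszul d, mul_add]
      _ = Γ a b c + Γ a b c := by rw [Finset.sum_add_distrib, key]
  rw [this, ← two_smul ℝ (Γ a b c), smul_smul]
  norm_num
end

section
/- The mean curvature of an isometric embedding of free real metric calculi is independent of the choice of basis of g': if {δᵢ} and {δ̃ᵢ} are two bases of g' related by δ̃ᵢ = A^k_i δ_k for an invertible real matrix A, then φ₀(h(m, α(δ̃ᵢ, Ψ(δ̃ⱼ))))(h̃')^{ij} = φ₀(h(m, α(δ_k, Ψ(δ_l))))(h')^{kl} for all m ∈ M. -/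
open MulOpposite

attribute [local instance 100] LieRing.ofAssociativeRing

section Aux
set_option linter.unusedSectionVars false

variable {A : Type} [Ring A] [StarRing A] [Algebra ℝ A]
  {M : Type} [AddCommGroup M] [Module ℝ M] [Module Aᵐᵒᵖ M] [IsScalarTower ℝ Aᵐᵒᵖ M]

lemma aux_op_smul (r : ℝ) (m : M) : op (algebraMap ℝ A r) • m = r • m := by
  rw [← MulOpposite.algebraMap_apply, algebraMap_smul]

lemma IsDerivation.one_eq {d : Module.End ℝ A} (hd : IsDerivation d) : d 1 = 0 := by
  have h := hd 1 1
  simp only [one_mul, mul_one] at h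
  exact left_eq_add.mp h

variable {C : RealCalculus A M} (co : Connection C)

lemma Connection.cov_zero_s14 (m : M) : co.cov 0 m = 0 := by
  have h := co.smul_d 1 0 0 m
  rw [one_smul, add_zero, one_smul] at h
  exact left_eq_add.mp h

/-- The covariant derivative as an `ℝ`-linear map in the derivation slot. -/
def Connection.covD (m : M) : C.g →ₗ[ℝ] M where
  toFun d := co.cov d m
  map_add' d d' := by
    have h := co.smul_d 1 d d' m
    rwa [one_smul, one_smul] at h
  map_smul' r d := by
    have h := co.smul_d r d 0 m
    rwa [add_zero, co.cov_zero_s14, add_zero] at h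

/-- The covariant derivative as an `ℝ`-linear map in the module slot. -/
def Connection.covM (d : C.g) : M →ₗ[ℝ] M where
  toFun m := co.cov d m
  map_add' := co.add_m d
  map_smul' r m := by
    have hd : IsDerivation (d : Module.End ℝ A) := C.g_der d d.2
    have h0 : (d : Module.End ℝ A) (algebraMap ℝ A r) = 0 := by
      rw [Algebra.algebraMap_eq_smul_one, map_smul, hd.one_eq, smul_zero]
    show co.cov d (r • m) = r • co.cov d m
    rw [← aux_op_smul (A := A) r m, co.leibniz, h0, op_zero, zero_smul,
      add_zero, aux_op_smul]

/-- A hermitian form as an `ℝ`-linear map in the second slot. -/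
def hermRight {h : M → M → A} (hh : IsHermitianForm A M h) (m : M) : M →ₗ[ℝ] A where
  toFun n := h m n
  map_add' := hh.add_right m
  map_smul' r n := by
    show h m (r • n) = r • h m n
    rw [← aux_op_smul (A := A) r n, hh.smul_right, ← Algebra.commutes]
    exact (Algebra.smul_def r (h m n)).symm

end Aux

set_option maxHeartbeats 2000000 in
/-- The mean curvature of an isometric embedding of free real metric calculi
is independent of the choice of basis of `g'`: for two bases `{δᵢ}` and `{δ̃ᵢ = Aᵏᵢ δₖ}`
related by an invertible real matrix `A`,
`φ₀(h(m, α(δ̃ᵢ, Ψ(δ̃ⱼ)))) (h̃')^{ij} = φ₀(h(m, α(δₖ, Ψ(δₗ)))) (h')^{kl}`. -/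
theorem stmt14 {A : Type} [Ring A] [StarRing A] [Algebra ℝ A]
    {M : Type} [AddCommGroup M] [Module ℝ M] [Module Aᵐᵒᵖ M] [IsScalarTower ℝ Aᵐᵒᵖ M]
    {A' : Type} [Ring A'] [StarRing A'] [Algebra ℝ A']
    {M' : Type} [AddCommGroup M'] [Module ℝ M'] [Module A'ᵐᵒᵖ M']
    [IsScalarTower ℝ A'ᵐᵒᵖ M']
    {C : RealCalculus A M} {C' : RealCalculus A' M'}
    (h : M → M → A) (h' : M' → M' → A')
    (co : Connection C) (co' : Connection C')
    (hPR : IsPseudoRiemannian C h co) (hPR' : IsPseudoRiemannian C' h' co')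
    (F : IsometricEmbedding C C' h h')
    -- freeness of (C_A, h) and (C_{A'}, h')
    (nA : ℕ) (bg : Module.Basis (Fin nA) ℝ C.g) (bM : Module.Basis (Fin nA) Aᵐᵒᵖ M)
    (hbM : ∀ i, bM i = C.φ (bg i))
    (hinv : ∀ f : M →ₗ[Aᵐᵒᵖ] A, ∃! m : M, ∀ x, h m x = f x)
    (n : ℕ) (bg' : Module.Basis (Fin n) ℝ C'.g) (bM' : Module.Basis (Fin n) A'ᵐᵒᵖ M')
    (hbM' : ∀ i, bM' i = C'.φ (bg' i))
    (hinv' : ∀ f : M' →ₗ[A'ᵐᵒᵖ] A', ∃! m' : M', ∀ x, h' m' x = f x)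
    -- a change of basis of g'
    (Amat : Matrix (Fin n) (Fin n) ℝ) (hA : IsUnit Amat)
    (δt : Fin n → C'.g) (hδt : ∀ i, δt i = ∑ k, Amat k i • bg' k)
    -- components of h' and their inverses in the two bases
    (hup huptil : Fin n → Fin n → A')
    (hup_l : ∀ a c, ∑ b, hup a b * h' (C'.φ (bg' b)) (C'.φ (bg' c)) =
      if a = c then 1 else 0)
    (hup_r : ∀ a c, ∑ b, h' (C'.φ (bg' a)) (C'.φ (bg' b)) * hup b c =
      if a = c then 1 else 0)
    (huptil_l : ∀ a c, ∑ b, huptil a b * h' (C'.φ (δt b)) (C'.φ (δt c)) =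
      if a = c then 1 else 0)
    (huptil_r : ∀ a c, ∑ b, h' (C'.φ (δt a)) (C'.φ (δt b)) * huptil b c =
      if a = c then 1 else 0) :
    -- notation: α δ m := co.cov (F.ψ δ) m - F.P (co.cov (F.ψ δ) m), Ψ δ := C.φ (F.ψ δ)
    ∀ m : M,
      (∑ i, ∑ j, F.φ₀ (h m (co.cov (F.ψ (δt i)) (C.φ (F.ψ (δt j))) -
          F.P (co.cov (F.ψ (δt i)) (C.φ (F.ψ (δt j)))))) * huptil i j) =
      (∑ k, ∑ l, F.φ₀ (h m (co.cov (F.ψ (bg' k)) (C.φ (F.ψ (bg' l))) -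
          F.P (co.cov (F.ψ (bg' k)) (C.φ (F.ψ (bg' l)))))) * hup k l) := by
  intro m
  classical
  have hdet := (Matrix.isUnit_iff_isUnit_det Amat).mp hA
  set f : ℝ →+* A' := (algebraMap ℝ A' : ℝ →+* A') with hf
  have hfl : ∀ (r : ℝ) (x : A'), f r * x = r • x := fun r x => (Algebra.smul_def r x).symm
  have hfr : ∀ (r : ℝ) (x : A'), x * f r = r • x := fun r x => by
    rw [← Algebra.commutes]; exact (Algebra.smul_def r x).symm
  -- matrices over A'
  set H : Matrix (Fin n) (Fin n) A' :=
    Matrix.of fun a b => h' (C'.φ (bg' a)) (C'.φ (bg' b)) with hH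
  set Ht : Matrix (Fin n) (Fin n) A' :=
    Matrix.of fun a b => h' (C'.φ (δt a)) (C'.φ (δt b)) with hHtdef
  set U : Matrix (Fin n) (Fin n) A' := Matrix.of fun a b => hup a b with hU
  set Ut : Matrix (Fin n) (Fin n) A' := Matrix.of fun a b => huptil a b with hUt
  set Ar : Matrix (Fin n) (Fin n) A' := Amat.map f with hAr
  set ArT : Matrix (Fin n) (Fin n) A' := Amat.transpose.map f with hArT
  set BrT : Matrix (Fin n) (Fin n) A' := (Amat⁻¹).transpose.map f with hBrT
  have hUH : U * H = 1 := by
    ext a c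
    simp [hU, hH, Matrix.mul_apply, Matrix.one_apply, hup_l]
  have hHtUt : Ht * Ut = 1 := by
    ext a c
    simp [hHtdef, hUt, Matrix.mul_apply, Matrix.one_apply, huptil_r]
  have hBrTArT : BrT * ArT = 1 := by
    have e : (Amat⁻¹).transpose * Amat.transpose = 1 := by
      rw [← Matrix.transpose_mul, Matrix.mul_nonsing_inv _ hdet, Matrix.transpose_one]
    calc BrT * ArT = ((Amat⁻¹).transpose * Amat.transpose).map f := Matrix.map_mul.symm
      _ = 1 := by rw [e]; exact Matrix.map_one f (map_zero f) (map_one f)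
  -- symmetry of h' on the image of φ'
  have hsym : ∀ x y : C'.g, h' (C'.φ x) (C'.φ y) = h' (C'.φ y) (C'.φ x) := fun x y => by
    rw [hPR'.metricCalc.herm.star_eq, hPR'.metricCalc.real]
  have hφ : ∀ i, C'.φ (δt i) = ∑ a, Amat a i • C'.φ (bg' a) := by
    intro i
    rw [hδt, map_sum]
    simp only [map_smul]
  have hexp : ∀ (z : M') (j : Fin n),
      h' z (C'.φ (δt j)) = ∑ b, Amat b j • h' z (C'.φ (bg' b)) := by
    intro z j
    have e : h' z (C'.φ (δt j)) = hermRight hPR'.metricCalc.herm z (C'.φ (δt j)) := rfl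
    rw [e, hφ j, map_sum]
    simp only [map_smul]
    rfl
  have hHt : Ht = ArT * H * Ar := by
    ext i j
    have step : Ht i j = ∑ b, Amat b j • ∑ a, Amat a i • H a b := by
      calc Ht i j = h' (C'.φ (δt i)) (C'.φ (δt j)) := rfl
        _ = ∑ b, Amat b j • h' (C'.φ (δt i)) (C'.φ (bg' b)) := hexp _ j
        _ = ∑ b, Amat b j • ∑ a, Amat a i • H a b := by
            refine Finset.sum_congr rfl fun b _ => ?_
            rw [hsym (δt i) (bg' b), hexp (C'.φ (bg' b)) i]
            refine congrArg _ (Finset.sum_congr rfl fun a _ => ?_)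
            rw [hsym (bg' b) (bg' a)]
            rfl
    rw [step]
    simp only [Matrix.mul_apply, Matrix.map_apply, Matrix.transpose_apply, hAr, hArT,
      Finset.sum_mul, hfl, hfr, Finset.smul_sum]
  -- matrix algebra: hup = A * huptil * Aᵀ
  have key1 : H * (Ar * Ut) = BrT := by
    have e : ArT * (H * (Ar * Ut)) = 1 := by
      calc ArT * (H * (Ar * Ut)) = ArT * H * Ar * Ut := by rw [← mul_assoc, ← mul_assoc]
        _ = Ht * Ut := by rw [← hHt]
        _ = 1 := hHtUt
    calc H * (Ar * Ut) = BrT * ArT * (H * (Ar * Ut)) := by rw [hBrTArT, one_mul]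
      _ = BrT * (ArT * (H * (Ar * Ut))) := mul_assoc _ _ _
      _ = BrT := by rw [e, mul_one]
  have hHX : H * (Ar * Ut * ArT) = 1 := by
    calc H * (Ar * Ut * ArT) = H * (Ar * Ut) * ArT := (mul_assoc _ _ _).symm
      _ = BrT * ArT := by rw [key1]
      _ = 1 := hBrTArT
  have hUX : U = Ar * Ut * ArT := by
    calc U = U * (H * (Ar * Ut * ArT)) := by rw [hHX, mul_one]
      _ = U * H * (Ar * Ut * ArT) := (mul_assoc _ _ _).symm
      _ = Ar * Ut * ArT := by rw [hUH, one_mul]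
  have hXentry : ∀ k l, hup k l = ∑ i, ∑ j, Amat k i • Amat l j • huptil i j := by
    intro k l
    have e : hup k l = (Ar * (Ut * ArT)) k l := by rw [← mul_assoc, ← hUX]; rfl
    rw [e]
    simp only [Matrix.mul_apply, Matrix.map_apply, Matrix.transpose_apply, hAr, hArT,
      Finset.mul_sum, hfl, hfr, Finset.smul_sum]
    rfl
  -- the second fundamental form term, as linear maps
  set φ₀L : A →ₗ[ℝ] A' := F.φ₀.toAlgHom.toLinearMap with hφ₀L
  set hmL : M →ₗ[ℝ] A := hermRight hPR.metricCalc.herm m with hhmL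
  set PL : M →ₗ[ℝ] M := F.P.restrictScalars ℝ with hPL
  set ψL : C'.g →ₗ[ℝ] C.g := F.ψ.toLinearMap with hψL
  set K : M → (C'.g →ₗ[ℝ] A') := fun m' =>
    φ₀L ∘ₗ hmL ∘ₗ (LinearMap.id - PL) ∘ₗ (co.covD m') ∘ₗ ψL with hK
  set L : Fin n → (C'.g →ₗ[ℝ] A') := fun k =>
    φ₀L ∘ₗ hmL ∘ₗ (LinearMap.id - PL) ∘ₗ (co.covM (F.ψ (bg' k))) ∘ₗ (C.φ ∘ₗ ψL) with hL
  have hid : ∀ δ₁ δ₂ : C'.g,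
      F.φ₀ (h m (co.cov (F.ψ δ₁) (C.φ (F.ψ δ₂)) -
        F.P (co.cov (F.ψ δ₁) (C.φ (F.ψ δ₂))))) = K (C.φ (F.ψ δ₂)) δ₁ := fun _ _ => rfl
  have hid2 : ∀ (δ : C'.g) (k : Fin n), K (C.φ (F.ψ δ)) (bg' k) = L k δ := fun _ _ => rfl
  have hδsum : ∀ (T : C'.g →ₗ[ℝ] A') (i : Fin n), T (δt i) = ∑ k, Amat k i • T (bg' k) := by
    intro T i
    rw [hδt, map_sum]
    simp only [map_smul]
  have gexp : ∀ i j, K (C.φ (F.ψ (δt j))) (δt i) =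
      ∑ k, Amat k i • ∑ l, Amat l j • L k (bg' l) := by
    intro i j
    rw [hδsum (K (C.φ (F.ψ (δt j)))) i]
    refine Finset.sum_congr rfl fun k _ => ?_
    rw [hid2 (δt j) k, hδsum (L k) j]
  have swap4 : ∀ (G : Fin n → Fin n → Fin n → Fin n → A'),
      ∑ i, ∑ j, ∑ k, ∑ l, G i j k l = ∑ k, ∑ l, ∑ i, ∑ j, G i j k l := by
    intro G
    calc ∑ i, ∑ j, ∑ k, ∑ l, G i j k l
        = ∑ i, ∑ k, ∑ j, ∑ l, G i j k l :=
          Finset.sum_congr rfl fun i _ => Finset.sum_comm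
      _ = ∑ k, ∑ i, ∑ j, ∑ l, G i j k l := Finset.sum_comm
      _ = ∑ k, ∑ i, ∑ l, ∑ j, G i j k l :=
          Finset.sum_congr rfl fun k _ => Finset.sum_congr rfl fun i _ => Finset.sum_comm
      _ = ∑ k, ∑ l, ∑ i, ∑ j, G i j k l :=
          Finset.sum_congr rfl fun k _ => Finset.sum_comm
  calc ∑ i, ∑ j, F.φ₀ (h m (co.cov (F.ψ (δt i)) (C.φ (F.ψ (δt j))) -
          F.P (co.cov (F.ψ (δt i)) (C.φ (F.ψ (δt j)))))) * huptil i j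
      = ∑ i, ∑ j, (∑ k, Amat k i • ∑ l, Amat l j • L k (bg' l)) * huptil i j := by
        refine Finset.sum_congr rfl fun i _ => Finset.sum_congr rfl fun j _ => ?_
        rw [hid (δt i) (δt j), gexp i j]
    _ = ∑ i, ∑ j, ∑ k, ∑ l, Amat k i • Amat l j • (L k (bg' l) * huptil i j) := by
        simp only [Finset.sum_mul, smul_mul_assoc, Finset.smul_sum]
    _ = ∑ k, ∑ l, ∑ i, ∑ j, Amat k i • Amat l j • (L k (bg' l) * huptil i j) := swap4 _
    _ = ∑ k, ∑ l, L k (bg' l) * hup k l := by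
        refine Finset.sum_congr rfl fun k _ => Finset.sum_congr rfl fun l _ => ?_
        rw [hXentry k l]
        simp only [Finset.mul_sum, mul_smul_comm]
    _ = ∑ k, ∑ l, F.φ₀ (h m (co.cov (F.ψ (bg' k)) (C.φ (F.ψ (bg' l))) -
          F.P (co.cov (F.ψ (bg' k)) (C.φ (F.ψ (bg' l)))))) * hup k l := by
        refine Finset.sum_congr rfl fun k _ => Finset.sum_congr rfl fun l _ => ?_
        rw [hid (bg' k) (bg' l), hid2 (bg' l) k]
end

section
/- Let a, b, c, d ∈ ℤ with ad − bc = 1, and let α: T²_θ → T²_θ be the algebra automorphism with α(U) = U^a V^b and α(V) = U^c V^d. Then the inverse automorphism is given by α⁻¹(U) = q^{½bd(a−c−1)} U^d V^{−b} and α⁻¹(V) = q^{½ac(d−b−1)} U^{−c} V^{a}, where q = e^{2πiθ}. -/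
section ncTorusHelpers
variable {A : Type} [Ring A] [Algebra ℂ A]

private lemma ncSmulmul (P Q : ℂˣ) (w x : Aˣ) : (P • w) * (Q • x) = (P * Q) • (w * x) := by
  ext
  show ((P:ℂ) • (w:A)) * ((Q:ℂ) • (x:A)) = ((P:ℂ)*(Q:ℂ)) • ((w:A)*(x:A))
  rw [smul_mul_smul_comm]

private lemma ncSmulmul' (P : ℂˣ) (w x : Aˣ) : (P • w) * x = P • (w * x) := by
  ext; exact smul_mul_assoc _ _ _

private lemma ncSmulmul'' (P : ℂˣ) (w x : Aˣ) : w * (P • x) = P • (w * x) := by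
  ext; exact mul_smul_comm _ _ _

private lemma ncSmulsmul (P Q : ℂˣ) (w : Aˣ) : P • (Q • w) = (P*Q) • w := by
  ext; show (P:ℂ) • (Q:ℂ) • (w:A) = _; rw [smul_smul]; rfl

private lemma ncSmulCongr (P : ℂˣ) {m n : ℤ} {w x : Aˣ} (h : m = n) (h2 : w = x) :
    P ^ m • w = P ^ n • x := by rw [h, h2]

private lemma ncCommZpow {u v : Aˣ} {P : ℂˣ} (h : v * u = (P ^ (2:ℤ)) • (u * v)) :
    ∀ m n : ℤ, v ^ m * u ^ n = (P ^ (2*m*n)) • (u ^ n * v ^ m) := by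
  have comm1 : ∀ n : ℤ, v * u ^ n = (P ^ (2*n)) • (u ^ n * v) := by
    have hneg : v * u⁻¹ = (P ^ (-2:ℤ)) • (u⁻¹ * v) := by
      have h1 : u⁻¹ * v = (P ^ (2:ℤ)) • (v * u⁻¹) := by
        calc u⁻¹ * v = u⁻¹ * (v * u) * u⁻¹ := by group
        _ = u⁻¹ * ((P ^ (2:ℤ)) • (u * v)) * u⁻¹ := by rw [h]
        _ = (P ^ (2:ℤ)) • (v * u⁻¹) := by
            rw [ncSmulmul'', ncSmulmul']; congr 1; group
      rw [h1, ncSmulsmul, ← zpow_add]; norm_num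
    intro n
    induction n using Int.induction_on with
    | zero => simp
    | succ i ih =>
        rw [zpow_add_one, ← mul_assoc, ih, ncSmulmul', mul_assoc, h, ncSmulmul'',
          ncSmulsmul, ← zpow_add]
        exact ncSmulCongr P (by ring) (by group)
    | pred i ih =>
        rw [zpow_sub_one, ← mul_assoc, ih, ncSmulmul', mul_assoc, hneg, ncSmulmul'',
          ncSmulsmul, ← zpow_add]
        exact ncSmulCongr P (by ring) (by group)
  have comm1' : ∀ n : ℤ, v⁻¹ * u ^ n = (P ^ (-(2*n))) • (u ^ n * v⁻¹) := by
    intro n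
    have h1 : u ^ n * v⁻¹ = (P ^ (2*n)) • (v⁻¹ * u ^ n) := by
      calc u ^ n * v⁻¹ = v⁻¹ * (v * u ^ n) * v⁻¹ := by group
      _ = v⁻¹ * ((P ^ (2*n)) • (u ^ n * v)) * v⁻¹ := by rw [comm1]
      _ = (P ^ (2*n)) • (v⁻¹ * u ^ n) := by
          rw [ncSmulmul'', ncSmulmul']; congr 1; group
    rw [h1, ncSmulsmul, ← zpow_add]; norm_num
  intro m n
  induction m using Int.induction_on with
  | zero => simp
  | succ i ih =>
      rw [zpow_add_one, mul_assoc, comm1, ncSmulmul'', ← mul_assoc, ih, ncSmulmul',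
        ncSmulsmul, ← zpow_add]
      exact ncSmulCongr P (by ring) (by group)
  | pred i ih =>
      rw [zpow_sub_one, mul_assoc, comm1', ncSmulmul'', ← mul_assoc, ih, ncSmulmul',
        ncSmulsmul, ← zpow_add]
      exact ncSmulCongr P (by ring) (by group)

private lemma ncPowWord {u v : Aˣ} {P : ℂˣ}
    (h : ∀ m n : ℤ, v ^ m * u ^ n = (P ^ (2*m*n)) • (u ^ n * v ^ m)) (s t : ℤ) :
    ∀ n : ℤ, (u ^ s * v ^ t) ^ n = (P ^ (s*t*n*(n-1))) • (u ^ (s*n) * v ^ (t*n)) := by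
  have hinv : (u ^ s * v ^ t)⁻¹ = (P ^ (2*t*s)) • (u ^ (-s) * v ^ (-t)) := by
    rw [mul_inv_rev, ← zpow_neg, ← zpow_neg]
    rw [h (-t) (-s)]
    exact ncSmulCongr P (by ring) rfl
  intro n
  induction n using Int.induction_on with
  | zero => simp
  | succ i ih =>
      rw [zpow_add_one, ih, ncSmulmul', mul_assoc (u ^ (s*(i:ℤ))),
        ← mul_assoc (v ^ (t*(i:ℤ))), h, ncSmulmul', ncSmulmul'', ncSmulsmul, ← zpow_add]
      exact ncSmulCongr P (by ring) (by group)
  | pred i ih =>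
      rw [zpow_sub_one, ih, hinv, ncSmulmul, mul_assoc (u ^ (s*(-i:ℤ))),
        ← mul_assoc (v ^ (t*(-i:ℤ))), h, ncSmulmul', ncSmulmul'', ncSmulsmul,
        ← zpow_add, ← zpow_add]
      exact ncSmulCongr P (by ring) (by group)

end ncTorusHelpers

/-- For the automorphism `α` of the noncommutative torus with
`α(U) = UᵃVᵇ`, `α(V) = UᶜVᵈ` and `ad − bc = 1`, the inverse is given by
`α⁻¹(U) = q^{½bd(a−c−1)} Uᵈ V⁻ᵇ` and `α⁻¹(V) = q^{½ac(d−b−1)} U⁻ᶜ Vᵃ`,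
where `q = e^{2πiθ} = p²` with `p = e^{πiθ}`. -/
theorem stmt16 {A : Type} [Ring A] [StarRing A] [Algebra ℂ A]
    (θ : ℝ) (u v : Aˣ)
    (hu : star ((u : A)) = ((u⁻¹ : Aˣ) : A))
    (hv : star ((v : A)) = ((v⁻¹ : Aˣ) : A))
    (p : ℂ) (hp : p = Complex.exp (Real.pi * θ * Complex.I))
    (hq : (v : A) * u = (p ^ 2) • ((u : A) * v))
    (a b c d : ℤ) (hdet : a * d - b * c = 1)
    (α : A ≃⋆ₐ[ℂ] A)
    (hαU : α (u : A) = ((u ^ a * v ^ b : Aˣ) : A))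
    (hαV : α (v : A) = ((u ^ c * v ^ d : Aˣ) : A)) :
    α.symm (u : A) = p ^ (b * d * (a - c - 1)) • ((u ^ d * v ^ (-b) : Aˣ) : A) ∧
    α.symm (v : A) = p ^ (a * c * (d - b - 1)) • ((u ^ (-c) * v ^ a : Aˣ) : A) := by
  have hp0 : p ≠ 0 := by rw [hp]; exact Complex.exp_ne_zero _
  set P : ℂˣ := Units.mk0 p hp0 with hP
  have hPz : ∀ k : ℤ, ((P ^ k : ℂˣ) : ℂ) = p ^ k := by
    intro k
    rw [Units.val_zpow_eq_zpow_val]; rfl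
  have hq2 : v * u = (P ^ (2:ℤ)) • (u * v) := by
    ext
    show ((v:A) * u) = ((P ^ (2:ℤ) : ℂˣ) : ℂ) • ((u:A) * v)
    rw [hPz, hq, show ((2:ℤ)) = ((2:ℕ):ℤ) from rfl, zpow_natCast]
  have comm := ncCommZpow hq2
  let β : Aˣ →* Aˣ := Units.map (α.toRingEquiv : A →* A)
  have hβ : ∀ w : Aˣ, ((β w : Aˣ) : A) = α (w : A) := fun w => rfl
  have hβu : β u = u ^ a * v ^ b := by ext; rw [hβ, hαU]
  have hβv : β v = u ^ c * v ^ d := by ext; rw [hβ, hαV]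
  have key1 : (u ^ a * v ^ b) ^ (d:ℤ) * (u ^ c * v ^ d) ^ (-b : ℤ)
      = (P ^ (-(b * d * (a - c - 1)))) • (u : Aˣ) := by
    rw [ncPowWord comm a b d, ncPowWord comm c d (-b), ncSmulmul,
      mul_assoc (u ^ (a*d)), ← mul_assoc (v ^ (b*d)), comm, ncSmulmul', ncSmulmul'',
      ncSmulsmul, ← zpow_add, ← zpow_add]
    have hbd : b * d + d * -b = 0 := by ring
    have had : a * d + c * -b = 1 := by linarith [hdet]
    rw [mul_assoc (u ^ (c * (-b:ℤ))), ← zpow_add, hbd, zpow_zero, mul_one,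
      ← zpow_add, had, zpow_one]
    exact ncSmulCongr P (by linear_combination (b*d) * hdet) rfl
  have key2 : (u ^ a * v ^ b) ^ (-c:ℤ) * (u ^ c * v ^ d) ^ (a : ℤ)
      = (P ^ (-(a * c * (d - b - 1)))) • (v : Aˣ) := by
    rw [ncPowWord comm a b (-c), ncPowWord comm c d a, ncSmulmul,
      mul_assoc (u ^ (a*(-c:ℤ))), ← mul_assoc (v ^ (b*(-c:ℤ))), comm, ncSmulmul', ncSmulmul'',
      ncSmulsmul, ← zpow_add, ← zpow_add]
    have hac : a * -c + c * a = 0 := by ring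
    have hbd : b * -c + d * a = 1 := by linarith [hdet]
    rw [mul_assoc (u ^ (c * a)), ← zpow_add, hbd, zpow_one, ← mul_assoc (u ^ (a * (-c:ℤ))),
      ← zpow_add, hac, zpow_zero, one_mul]
    exact ncSmulCongr P (by linear_combination (a*c) * hdet) rfl
  constructor
  · have key : α (p ^ (b * d * (a - c - 1)) • ((u ^ d * v ^ (-b) : Aˣ) : A)) = (u : A) := by
      rw [map_smul, ← hβ, map_mul, map_zpow, map_zpow, hβu, hβv, key1]
      show _ • (((P ^ (-(b * d * (a - c - 1))) : ℂˣ) : ℂ) • ((u:Aˣ):A)) = _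
      rw [hPz, smul_smul, ← zpow_add₀ hp0]
      simp
    rw [← key, StarAlgEquiv.symm_apply_apply]
  · have key : α (p ^ (a * c * (d - b - 1)) • ((u ^ (-c) * v ^ a : Aˣ) : A)) = (v : A) := by
      rw [map_smul, ← hβ, map_mul, map_zpow, map_zpow, hβu, hβv, key2]
      show _ • (((P ^ (-(a * c * (d - b - 1))) : ℂˣ) : ℂ) • ((v:Aˣ):A)) = _
      rw [hPz, smul_smul, ← zpow_add₀ hp0]
      simp
    rw [← key, StarAlgEquiv.symm_apply_apply]
end
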